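/- arXiv:2307.02180 — 2 statements merged into one kernel-verified Lean document; each statement's English description precedes it below -/
import Mathlib

section
/- Let T_b, T_c, T_d : ℕ → ℝ≥0 be polylog-polynomial, i.e., T_b(n) = Θ(n^{j₁} (log n)^{k₁}) and T_c(n)+T_d(n) = Θ(n^{j₂} (log n)^{k₂}). Define T_r by T_r(n) = T_b(n) + T_r(n-1) and T_u by T_u(n) = T_c(n) + T_d(n) + T_u(⌊n/2⌋) (with bounded base cases). If T_c(n)+T_d(n) = Θ(T_b(n)), then T_u(n) = o(T_r(n)). -/
/-!
Unrolling the halving recurrence, `T_u(n)` is a sum of about `log₂ n` terms, each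
`O(T_b(n)) = O(F n)` with `F n = n ^ j * (log n) ^ k` monotone; hence `T_u = O(log n · F n)`.
Unrolling the other recurrence, `T_r(n)` dominates `T_b(⌊n/2⌋ + 1) + ⋯ + T_b(n)`: about `n / 2`
terms, each `≳ F(⌊n/2⌋ + 1) ≳ F n` because `F (2 m) = O(F m)`; hence `n · F n = O(T_r)`.
Since `log n = o(n)`, `T_u = o(T_r)`.
-/

open Filter Asymptotics

section Polylog

variable (j k : ℕ)

lemma polylog_nonneg (n : ℕ) : 0 ≤ (n : ℝ) ^ j * Real.log n ^ k := by
  have := Real.log_natCast_nonneg n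
  positivity

lemma monotone_polylog : Monotone fun n : ℕ => (n : ℝ) ^ j * Real.log n ^ k := by
  have hlog : Monotone fun n : ℕ => Real.log n := by
    intro a b hab
    rcases Nat.eq_zero_or_pos a with rfl | ha
    · simpa using Real.log_natCast_nonneg b
    · exact Real.log_le_log (by exact_mod_cast ha) (by exact_mod_cast hab)
  refine Monotone.mul (fun a b hab => ?_) (fun a b hab => ?_) (fun n => by positivity)
    (fun n => pow_nonneg (Real.log_natCast_nonneg n) k)
  · exact pow_le_pow_left₀ (Nat.cast_nonneg a) (by exact_mod_cast hab) j
  · exact pow_le_pow_left₀ (Real.log_natCast_nonneg a) (hlog hab) k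

lemma one_isBigO_polylog :
    (fun _ => (1 : ℝ)) =O[atTop] fun n : ℕ => (n : ℝ) ^ j * Real.log n ^ k := by
  refine IsBigO.of_bound' ?_
  filter_upwards [eventually_ge_atTop 3] with n hn
  have hn : (3 : ℝ) ≤ n := by exact_mod_cast hn
  have hlog : 1 ≤ Real.log n := by
    rw [Real.le_log_iff_exp_le (by linarith)]
    linarith [Real.exp_one_lt_d9]
  rw [norm_one, Real.norm_of_nonneg (by positivity)]
  exact one_le_mul_of_one_le_of_one_le (one_le_pow₀ (by linarith)) (one_le_pow₀ hlog)

lemma polylog_two_mul_isBigO :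
    (fun m : ℕ => ((2 * m : ℕ) : ℝ) ^ j * Real.log (2 * m : ℕ) ^ k) =O[atTop]
      fun m : ℕ => (m : ℝ) ^ j * Real.log m ^ k := by
  refine IsBigO.of_bound (2 ^ (j + k)) ?_
  filter_upwards [eventually_ge_atTop 2] with m hm
  rw [Real.norm_of_nonneg (polylog_nonneg j k _), Real.norm_of_nonneg (polylog_nonneg j k _)]
  have hm : (2 : ℝ) ≤ m := by exact_mod_cast hm
  have hlog : Real.log (2 * m) ≤ 2 * Real.log m := by
    rw [Real.log_mul two_ne_zero (by positivity)]
    linarith [Real.log_le_log two_pos hm]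
  calc ((2 * m : ℕ) : ℝ) ^ j * Real.log (2 * m : ℕ) ^ k
      ≤ (2 * m) ^ j * (2 * Real.log m) ^ k := by
        push_cast
        gcongr
        exact Real.log_nonneg (by linarith)
    _ = 2 ^ (j + k) * ((m : ℝ) ^ j * Real.log m ^ k) := by ring

end Polylog

lemma le_const_add_log_mul_of_le_add_half {T G : ℕ → ℝ} {C : ℝ} (hG : Monotone G)
    (hT : ∀ n, 2 ≤ n → T n ≤ G n + T (n / 2)) (hT_base : ∀ n, n < 2 → T n ≤ C) (n : ℕ) :
    T n ≤ C + Nat.log 2 n * G n := by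
  induction n using Nat.strong_induction_on with
  | _ n ih =>
    rcases lt_or_ge n 2 with hn | hn
    · simpa [Nat.log_of_lt hn] using hT_base n hn
    · have hlog : (Nat.log 2 (n / 2) : ℝ) + 1 = Nat.log 2 n := by
        rw [Nat.log_div_base]
        have : 1 ≤ Nat.log 2 n := Nat.le_log_of_pow_le one_lt_two (by simpa using hn)
        push_cast [this]
        ring
      calc T n ≤ G n + T (n / 2) := hT n hn
        _ ≤ G n + (C + Nat.log 2 (n / 2) * G (n / 2)) := by
          gcongr; exact ih _ (Nat.div_lt_self (by omega) one_lt_two)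
        _ ≤ G n + (C + Nat.log 2 (n / 2) * G n) := by
          gcongr; exact hG (Nat.div_le_self n 2)
        _ = C + Nat.log 2 n * G n := by rw [← hlog]; ring

lemma natLog_two_isBigO_log :
    (fun n : ℕ => (Nat.log 2 n : ℝ)) =O[atTop] fun n : ℕ => Real.log n := by
  refine IsBigO.of_bound (Real.log 2)⁻¹ (Eventually.of_forall fun n => ?_)
  rw [Real.norm_of_nonneg (Nat.cast_nonneg _), Real.norm_of_nonneg (Real.log_natCast_nonneg n),
    inv_mul_eq_div, Real.log_div_log]
  exact_mod_cast Real.natLog_le_logb n 2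

lemma isBigO_log_mul_of_le_add_half {T g F : ℕ → ℝ} {C : ℝ} (hF : Monotone F)
    (hF₀ : ∀ n, 0 ≤ F n) (hF₁ : (fun _ => (1 : ℝ)) =O[atTop] F) (hg : g =O[atTop] F)
    (hT : ∀ n, 2 ≤ n → T n ≤ g n + T (n / 2)) (hT_base : ∀ n, n < 2 → T n ≤ C)
    (hT₀ : ∀ n, 0 ≤ T n) :
    T =O[atTop] fun n => Real.log n * F n := by
  have hF_add : ∀ n, F n + 1 ≠ 0 := fun n => by linarith [hF₀ n]
  have hgF : g =O[atTop] fun n => F n + 1 :=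
    hg.trans <| isBigO_of_le _ fun n => by
      rw [Real.norm_of_nonneg (hF₀ n), Real.norm_of_nonneg (by linarith [hF₀ n])]
      linarith
  obtain ⟨D, hD, hgD⟩ := bound_of_isBigO_nat_atTop hgF
  have hG : Monotone fun n => D * (F n + 1) := fun _ _ hab =>
    mul_le_mul_of_nonneg_left (add_le_add_left (hF hab) 1) hD.le
  have hgD' : ∀ n, g n ≤ D * (F n + 1) := fun n => by
    have := hgD (hF_add n)
    rw [Real.norm_of_nonneg (add_nonneg (hF₀ n) zero_le_one)] at this
    exact (Real.le_norm_self _).trans this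
  have hbound : ∀ n, T n ≤ C + Nat.log 2 n * (D * (F n + 1)) :=
    le_const_add_log_mul_of_le_add_half hG
    (fun n hn => (hT n hn).trans (add_le_add_left (hgD' n) _)) hT_base
  have hlog₁ : (fun _ => (1 : ℝ)) =O[atTop] fun n : ℕ => Real.log n :=
    ((isLittleO_one_left_iff ℝ).2 <| tendsto_norm_atTop_atTop.comp <|
      Real.tendsto_log_atTop.comp tendsto_natCast_atTop_atTop).isBigO
  have hconst : (fun _ => C) =O[atTop] fun n : ℕ => Real.log n * F n :=
    (isBigO_const_one ℝ C atTop).trans (by simpa using hlog₁.mul hF₁)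
  have hstep : (fun n => Nat.log 2 n * (D * (F n + 1))) =O[atTop] fun n => Real.log n * F n :=
    natLog_two_isBigO_log.mul (((isBigO_refl F atTop).add hF₁).const_mul_left D)
  refine (isBigO_of_le _ fun n => ?_).trans (hconst.add hstep)
  rw [Real.norm_of_nonneg (hT₀ n)]
  exact (hbound n).trans (Real.le_norm_self _)

lemma eq_add_sum_Ioc_of_eq_add_pred {M : Type*} [AddCommMonoid M] {S b : ℕ → M}
    (hS : ∀ n, 2 ≤ n → S n = b n + S (n - 1)) {a n : ℕ} (ha : 1 ≤ a) (han : a ≤ n) :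
    S n = S a + ∑ m ∈ Finset.Ioc a n, b m := by
  induction n, han using Nat.le_induction with
  | base => simp
  | succ n hn ih =>
    rw [Finset.sum_Ioc_succ_top hn, hS (n + 1) (by omega), Nat.add_sub_cancel, ih]
    abel

lemma isBigO_sum_Ioc_half {F b : ℕ → ℝ} (h : F =O[atTop] b) (hb : ∀ n, 0 ≤ b n) :
    (fun n => ∑ m ∈ Finset.Ioc (n / 2) n, F m) =O[atTop]
      fun n => ∑ m ∈ Finset.Ioc (n / 2) n, b m := by
  obtain ⟨C, hC⟩ := h.bound
  obtain ⟨N, hN⟩ := eventually_atTop.1 hC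
  refine IsBigO.of_bound C ?_
  filter_upwards [eventually_ge_atTop (2 * N)] with n hn
  calc ‖∑ m ∈ Finset.Ioc (n / 2) n, F m‖
      ≤ ∑ m ∈ Finset.Ioc (n / 2) n, C * ‖b m‖ :=
        (norm_sum_le _ _).trans <| Finset.sum_le_sum fun m hm => hN m <| by
          rw [Finset.mem_Ioc] at hm; omega
    _ = C * ‖∑ m ∈ Finset.Ioc (n / 2) n, b m‖ := by
        rw [← Finset.mul_sum, Real.norm_of_nonneg (Finset.sum_nonneg fun m _ => hb m)]
        simp only [Real.norm_of_nonneg (hb _)]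

lemma mul_isBigO_sum_Ioc_half {F : ℕ → ℝ} (hF : Monotone F) (hF₀ : ∀ n, 0 ≤ F n)
    (hF₂ : (fun m => F (2 * m)) =O[atTop] F) :
    (fun n : ℕ => (n : ℝ) * F n) =O[atTop] fun n => ∑ m ∈ Finset.Ioc (n / 2) n, F m := by
  obtain ⟨c, hc, hcF⟩ := hF₂.exists_pos
  have hhalf : Tendsto (fun n => n / 2 + 1) atTop atTop :=
    tendsto_atTop_atTop.2 fun b => ⟨2 * b, fun n hn => by omega⟩
  refine IsBigO.of_bound (2 * c) ?_
  filter_upwards [hhalf.eventually hcF.bound] with n hn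
  rw [Real.norm_of_nonneg (hF₀ _), Real.norm_of_nonneg (hF₀ _)] at hn
  have hFn : F n ≤ c * F (n / 2 + 1) := (hF (by omega)).trans hn
  have hcard : (n : ℝ) ≤ 2 * (Finset.Ioc (n / 2) n).card := by
    rw [Nat.card_Ioc]; exact_mod_cast (by omega : n ≤ 2 * (n - n / 2))
  have hsum : ((Finset.Ioc (n / 2) n).card : ℝ) * F (n / 2 + 1) ≤
      ∑ m ∈ Finset.Ioc (n / 2) n, F m := by
    rw [← nsmul_eq_mul]
    exact Finset.card_nsmul_le_sum _ _ _ fun m hm => hF (by rw [Finset.mem_Ioc] at hm; omega)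
  rw [Real.norm_of_nonneg (by positivity [hF₀ n]),
    Real.norm_of_nonneg (Finset.sum_nonneg fun m _ => hF₀ m)]
  calc (n : ℝ) * F n ≤ 2 * (Finset.Ioc (n / 2) n).card * (c * F (n / 2 + 1)) :=
        mul_le_mul hcard hFn (hF₀ n) (by positivity)
    _ = 2 * c * ((Finset.Ioc (n / 2) n).card * F (n / 2 + 1)) := by ring
    _ ≤ 2 * c * ∑ m ∈ Finset.Ioc (n / 2) n, F m := by gcongr

lemma mul_isBigO_of_eq_add_pred {F b S : ℕ → ℝ} (hF : Monotone F) (hF₀ : ∀ n, 0 ≤ F n)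
    (hF₂ : (fun m => F (2 * m)) =O[atTop] F) (hFb : F =O[atTop] b) (hb : ∀ n, 0 ≤ b n)
    (hS : ∀ n, 2 ≤ n → S n = b n + S (n - 1)) (hS₀ : ∀ n, 0 ≤ S n) :
    (fun n : ℕ => (n : ℝ) * F n) =O[atTop] S := by
  refine (mul_isBigO_sum_Ioc_half hF hF₀ hF₂).trans <| (isBigO_sum_Ioc_half hFb hb).trans <|
    IsBigO.of_bound' ?_
  filter_upwards [eventually_ge_atTop 2] with n hn
  rw [Real.norm_of_nonneg (Finset.sum_nonneg fun m _ => hb m), Real.norm_of_nonneg (hS₀ n),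
    eq_add_sum_Ioc_of_eq_add_pred hS (a := n / 2) (by omega) (Nat.div_le_self n 2)]
  exact le_add_of_nonneg_left (hS₀ _)

theorem superlinear_speedup_sufficient_general (j₁ k₁ : ℕ)
    (Tb Tc Td Tr Tu : ℕ → NNReal)
    (hTb : (fun n : ℕ => (Tb n : ℝ)) =Θ[atTop]
      fun n : ℕ => (n : ℝ) ^ j₁ * (Real.log n) ^ k₁)
    (hTr : ∀ n, 2 ≤ n → Tr n = Tb n + Tr (n - 1))
    (hTu : ∀ n, 2 ≤ n → Tu n = Tc n + Td n + Tu (n / 2))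
    (hTub : ∃ C, ∀ n, n < 2 → Tu n ≤ C)
    (hcond : (fun n : ℕ => ((Tc n : ℝ) + (Td n : ℝ))) =Θ[atTop]
      fun n : ℕ => (Tb n : ℝ)) :
    (fun n : ℕ => (Tu n : ℝ)) =o[atTop] fun n : ℕ => (Tr n : ℝ) := by
  set F : ℕ → ℝ := fun n => (n : ℝ) ^ j₁ * Real.log n ^ k₁
  obtain ⟨C, hC⟩ := hTub
  have hTu_le : (fun n => (Tu n : ℝ)) =O[atTop] fun n => Real.log n * F n :=
    isBigO_log_mul_of_le_add_half (monotone_polylog j₁ k₁) (polylog_nonneg j₁ k₁)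
      (one_isBigO_polylog j₁ k₁) (hcond.trans hTb).isBigO
      (fun n hn => by rw [hTu n hn]; push_cast; rfl)
      (fun n hn => NNReal.coe_le_coe.2 (hC n hn)) fun n => (Tu n).2
  have hTr_ge : (fun n : ℕ => (n : ℝ) * F n) =O[atTop] fun n => (Tr n : ℝ) :=
    mul_isBigO_of_eq_add_pred (monotone_polylog j₁ k₁) (polylog_nonneg j₁ k₁)
      (polylog_two_mul_isBigO j₁ k₁) hTb.symm.isBigO (fun n => (Tb n).2)
      (fun n hn => by rw [hTr n hn]; push_cast; rfl) fun n => (Tr n).2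
  have hlog : (fun n : ℕ => Real.log n * F n) =o[atTop] fun n : ℕ => (n : ℝ) * F n :=
    (Real.isLittleO_log_id_atTop.comp_tendsto tendsto_natCast_atTop_atTop).mul_isBigO
      (isBigO_refl F atTop)
  exact (hTu_le.trans_isLittleO hlog).trans_isBigO hTr_ge

/-- Sufficient condition for super-linear speedup: if the combined
recursive step of unfolder and meta-interpreter has the same asymptotic
complexity as a recursive step of the original rule, then the unfolded
recursion T_u is asymptotically strictly faster than the original
recursion T_r. -/
theorem superlinear_speedup_sufficient (j₁ k₁ j₂ k₂ : ℕ)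
    (Tb Tc Td Tr Tu : ℕ → NNReal)
    (hTb : (fun n : ℕ => (Tb n : ℝ)) =Θ[atTop]
      fun n : ℕ => (n : ℝ) ^ j₁ * (Real.log n) ^ k₁)
    (hTcd : (fun n : ℕ => ((Tc n : ℝ) + (Td n : ℝ))) =Θ[atTop]
      fun n : ℕ => (n : ℝ) ^ j₂ * (Real.log n) ^ k₂)
    (hTr : ∀ n, 2 ≤ n → Tr n = Tb n + Tr (n - 1))
    (hTu : ∀ n, 2 ≤ n → Tu n = Tc n + Td n + Tu (n / 2))
    (hTrb : ∃ C, ∀ n, n < 2 → Tr n ≤ C)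
    (hTub : ∃ C, ∀ n, n < 2 → Tu n ≤ C)
    (hcond : (fun n : ℕ => ((Tc n : ℝ) + (Td n : ℝ))) =Θ[atTop]
      fun n : ℕ => (Tb n : ℝ)) :
    (fun n : ℕ => (Tu n : ℝ)) =o[atTop] fun n : ℕ => (Tr n : ℝ) :=
  superlinear_speedup_sufficient_general j₁ k₁ Tb Tc Td Tr Tu hTb hTr hTu hTub hcond
end

section
/- Let T_b(n) = Θ(n^{j₁} (log n)^{k₁}) and T_c(n)+T_d(n) = Θ(n^{j₂} (log n)^{k₂}) for fixed nonnegative integers j₁,k₁,j₂,k₂, and define T_r(n) = T_b(n) + T_r(n-1), T_u(n) = T_c(n)+T_d(n) + T_u(⌊n/2⌋) with bounded base cases. Then T_u(n) = o(T_r(n)) if and only if T_c(n)+T_d(n) = o(n · T_b(n)). -/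
/-!
Unrolling `T_r` gives `T_r(n) = T_r(1) + ∑_{2 ≤ m ≤ n} T_b(m)`; since `n^j (log n)^k` is monotone
and changes by a bounded factor when `n` is halved, already the top half of this sum is of
order `n · T_b(n)`, so `T_r = Θ(n · T_b)`. As `T_u(n) ≥ (T_c + T_d)(n)`, the forward direction
follows. Conversely, a recursion `T(n) ≤ F(n) + T(r(n))` with `F = O(g)` is `O(h)` as soon as
the potential `h` satisfies `h(r(n)) + ε g(n) ≤ h(n)`. For the halving recursion take `h = g`
when `j₂ ≥ 1` (then `g(⌊n/2⌋) ≤ g(n)/2`) and `h = log · g` when `j₂ = 0`; in the second case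
`T_u = O((log n)^(k₂+1)) = o(n)` outright.
-/

open Filter Asymptotics Finset

theorem le_add_of_potential {T F φ : ℕ → ℝ} {r : ℕ → ℕ} {N : ℕ}
    (hrec : ∀ n ≥ N, r n < n ∧ T n ≤ F n + T (r n))
    (hφ : ∀ n ≥ N, F n + φ (r n) ≤ φ n) :
    ∃ A, ∀ n, T n ≤ A + φ n := by
  refine ⟨∑ m ∈ range N, |T m - φ m|, fun n => ?_⟩
  induction n using Nat.strong_induction_on with
  | _ n ih =>
    by_cases hn : n < N
    · have := single_le_sum (fun m _ => abs_nonneg (T m - φ m)) (mem_range.2 hn)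
      linarith [le_abs_self (T n - φ n)]
    · obtain ⟨hr, hT⟩ := hrec n (not_lt.1 hn)
      linarith [ih _ hr, hφ n (not_lt.1 hn)]

theorem isBigO_of_recurrence {T F g h : ℕ → ℝ} {r : ℕ → ℕ} {ε : ℝ} (hT₀ : ∀ n, 0 ≤ T n)
    (hrec : ∀ᶠ n in atTop, r n < n ∧ T n ≤ F n + T (r n)) (hFg : F =O[atTop] g)
    (hg₀ : ∀ᶠ n in atTop, 0 ≤ g n) (hε : 0 < ε)
    (hh : ∀ᶠ n in atTop, h (r n) + ε * g n ≤ h n) (hh₁ : ∀ᶠ n in atTop, 1 ≤ h n) :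
    T =O[atTop] h := by
  obtain ⟨c, hc, hFc⟩ := hFg.exists_pos
  have hF : ∀ᶠ n in atTop, F n ≤ c * g n := by
    filter_upwards [hFc.bound, hg₀] with n hn hgn
    rw [Real.norm_of_nonneg hgn] at hn
    exact (le_abs_self _).trans hn
  obtain ⟨N, hN⟩ := eventually_atTop.1 (hrec.and (hF.and hh))
  obtain ⟨A, hA⟩ := le_add_of_potential (φ := fun n => c / ε * h n)
    (fun n hn => (hN n hn).1) fun n hn => by
      obtain ⟨-, hFn, hhn⟩ := hN n hn
      have : c / ε * (h (r n) + ε * g n) ≤ c / ε * h n := by gcongr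
      have hcg : c / ε * (ε * g n) = c * g n := by field_simp
      linarith [mul_add (c / ε) (h (r n)) (ε * g n)]
  refine IsBigO.of_bound (|A| + c / ε) ?_
  filter_upwards [hh₁] with n hn
  rw [Real.norm_of_nonneg (hT₀ n), Real.norm_of_nonneg (by linarith)]
  nlinarith [hA n, le_abs_self A, abs_nonneg A]

theorem eq_add_sum_Ioc_of_recurrence {T F : ℕ → ℝ} (hrec : ∀ n ≥ 2, T n = F n + T (n - 1))
    {m n : ℕ} (hm : 1 ≤ m) (hmn : m ≤ n) : T n = T m + ∑ i ∈ Ioc m n, F i := by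
  induction n, hmn using Nat.le_induction with
  | base => simp
  | succ n hmn ih =>
    rw [sum_Ioc_succ_top hmn, hrec (n + 1) (by omega), Nat.add_sub_cancel, ih]
    ring

theorem natCast_mul_isBigO_of_recurrence {T F g : ℕ → ℝ} (hT₀ : ∀ n, 0 ≤ T n)
    (hF₀ : ∀ n, 0 ≤ F n) (hrec : ∀ n ≥ 2, T n = F n + T (n - 1)) (hgF : g =O[atTop] F)
    (hg : Monotone g) (hg₀ : ∀ n, 0 ≤ g n) (hdouble : g =O[atTop] fun n => g (n / 2)) :
    (fun n : ℕ => (n : ℝ) * g n) =O[atTop] T := by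
  obtain ⟨c, hc, hgc⟩ := hgF.exists_pos
  obtain ⟨N, hN⟩ := eventually_atTop.1 hgc.bound
  have hhalf : (fun n : ℕ => (n : ℝ)) =O[atTop] fun n => ((n - n / 2 : ℕ) : ℝ) := by
    refine IsBigO.of_bound 2 (Eventually.of_forall fun n => ?_)
    simp only [Real.norm_natCast]
    exact_mod_cast (by omega : n ≤ 2 * (n - n / 2))
  refine (hhalf.mul hdouble).trans (IsBigO.of_bound c ?_)
  filter_upwards [eventually_ge_atTop (2 * N + 2)] with n hn
  have hg_le : ∀ i ∈ Ioc (n / 2) n, g (n / 2) ≤ c * F i := fun i hi => by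
    have := hN i (by grind)
    rw [Real.norm_of_nonneg (hg₀ i), Real.norm_of_nonneg (hF₀ i)] at this
    exact (hg (mem_Ioc.1 hi).1.le).trans this
  have hsum := card_nsmul_le_sum _ _ _ hg_le
  rw [Nat.card_Ioc, nsmul_eq_mul, ← mul_sum] at hsum
  rw [Real.norm_of_nonneg (mul_nonneg (Nat.cast_nonneg _) (hg₀ _)), Real.norm_of_nonneg (hT₀ n)]
  rw [eq_add_sum_Ioc_of_recurrence hrec (m := n / 2) (by omega) (Nat.div_le_self n 2)]
  nlinarith [hT₀ (n / 2)]

noncomputable def polyLog (j k n : ℕ) : ℝ := (n : ℝ) ^ j * Real.log n ^ k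

theorem polyLog_nonneg (j k n : ℕ) : 0 ≤ polyLog j k n := by
  unfold polyLog; have := Real.log_natCast_nonneg n; positivity

theorem polyLog_succ (j k n : ℕ) : polyLog (j + 1) k n = n * polyLog j k n := by
  simp only [polyLog]; ring

theorem monotone_log_natCast : Monotone fun n : ℕ => Real.log n := by
  intro a b hab
  rcases Nat.eq_zero_or_pos a with rfl | ha
  · simpa using Real.log_natCast_nonneg b
  · exact Real.log_le_log (by exact_mod_cast ha) (by exact_mod_cast hab)

theorem log_natCast_pow_le_pow (k : ℕ) {a b : ℕ} (hab : a ≤ b) :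
    Real.log a ^ k ≤ Real.log b ^ k :=
  pow_le_pow_left₀ (Real.log_natCast_nonneg a) (monotone_log_natCast hab) k

theorem polyLog_monotone (j k : ℕ) : Monotone (polyLog j k) := fun a b hab =>
  mul_le_mul (pow_le_pow_left₀ (Nat.cast_nonneg a) (Nat.cast_le.2 hab) j)
    (log_natCast_pow_le_pow k hab) (pow_nonneg (Real.log_natCast_nonneg a) k) (by positivity)

theorem eventually_one_le_polyLog (j k : ℕ) : ∀ᶠ n in atTop, 1 ≤ polyLog j k n := by
  filter_upwards [eventually_ge_atTop 3] with n hn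
  have hn' : (3 : ℝ) ≤ n := by exact_mod_cast hn
  have hlog : 1 ≤ Real.log n := by
    rw [Real.le_log_iff_exp_le (by linarith)]
    linarith [Real.exp_one_lt_d9]
  exact one_le_mul_of_one_le_of_one_le (one_le_pow₀ (by linarith)) (one_le_pow₀ hlog)

theorem polyLog_isBigO_half (j k : ℕ) :
    polyLog j k =O[atTop] fun n => polyLog j k (n / 2) := by
  have hpow : (fun n : ℕ => (n : ℝ)) =O[atTop] fun n => ((n / 2 : ℕ) : ℝ) := by
    refine IsBigO.of_bound 3 ?_
    filter_upwards [eventually_ge_atTop 2] with n hn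
    simp only [Real.norm_natCast]
    exact_mod_cast (by omega : n ≤ 3 * (n / 2))
  -- `n ≤ (n / 2) ^ 2` once `n / 2 ≥ 3`
  have hlog : (fun n : ℕ => Real.log n) =O[atTop] fun n => Real.log (n / 2 : ℕ) := by
    refine IsBigO.of_bound 2 ?_
    filter_upwards [eventually_ge_atTop 6] with n hn
    rw [Real.norm_of_nonneg (Real.log_natCast_nonneg _),
      Real.norm_of_nonneg (Real.log_natCast_nonneg _),
      show (2 : ℝ) * Real.log (n / 2 : ℕ) = Real.log (((n / 2 : ℕ) : ℝ) ^ 2) by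
        rw [Real.log_pow]; norm_num]
    refine Real.log_le_log (by positivity) ?_
    have hq : (3 : ℝ) ≤ (n / 2 : ℕ) := by exact_mod_cast (by omega : 3 ≤ n / 2)
    have hn2 : (n : ℝ) ≤ 2 * (n / 2 : ℕ) + 1 := by
      exact_mod_cast (by omega : n ≤ 2 * (n / 2) + 1)
    nlinarith
  exact (hpow.pow j).mul (hlog.pow k)

theorem two_mul_polyLog_half_le {j : ℕ} (hj : 1 ≤ j) (k n : ℕ) :
    2 * polyLog j k (n / 2) ≤ polyLog j k n := by
  have hhalf : (2 : ℝ) * (n / 2 : ℕ) ≤ n := by exact_mod_cast Nat.mul_div_le n 2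
  have hpow : 2 * ((n / 2 : ℕ) : ℝ) ^ j ≤ (n : ℝ) ^ j :=
    calc 2 * ((n / 2 : ℕ) : ℝ) ^ j ≤ 2 ^ j * ((n / 2 : ℕ) : ℝ) ^ j := by
          gcongr; exact le_self_pow₀ one_le_two (by omega)
      _ = (2 * (n / 2 : ℕ) : ℝ) ^ j := (mul_pow _ _ _).symm
      _ ≤ (n : ℝ) ^ j := by gcongr
  have hlog : Real.log (n / 2 : ℕ) ^ k ≤ Real.log n ^ k :=
    log_natCast_pow_le_pow k (Nat.div_le_self n 2)
  unfold polyLog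
  rw [← mul_assoc]
  exact mul_le_mul hpow hlog (pow_nonneg (Real.log_natCast_nonneg _) k) (by positivity)

theorem polyLog_zero_succ_half_add_le (k : ℕ) {n : ℕ} (hn : 2 ≤ n) :
    polyLog 0 (k + 1) (n / 2) + Real.log 2 * polyLog 0 k n ≤ polyLog 0 (k + 1) n := by
  simp only [polyLog, pow_zero, one_mul]
  -- `log ⌊n / 2⌋ ≤ log n - log 2`, and `(x - l) ^ (k + 1) ≤ (x - l) * x ^ k`
  have hlog : Real.log (n / 2 : ℕ) ≤ Real.log n - Real.log 2 := by
    rw [← Real.log_div (by positivity) two_ne_zero]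
    exact Real.log_le_log (by exact_mod_cast (by omega : 0 < n / 2)) Nat.cast_div_le
  have hpow : Real.log (n / 2 : ℕ) ^ k ≤ Real.log n ^ k :=
    log_natCast_pow_le_pow k (Nat.div_le_self n 2)
  have h0 := Real.log_natCast_nonneg (n / 2)
  have h2 : Real.log 2 ≤ Real.log n := Real.log_le_log two_pos (by exact_mod_cast hn)
  calc Real.log (n / 2 : ℕ) ^ (k + 1) + Real.log 2 * Real.log n ^ k
      = Real.log (n / 2 : ℕ) * Real.log (n / 2 : ℕ) ^ k + Real.log 2 * Real.log n ^ k := by ring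
    _ ≤ (Real.log n - Real.log 2) * Real.log n ^ k + Real.log 2 * Real.log n ^ k := by
        gcongr
    _ = Real.log n ^ (k + 1) := by ring

theorem polyLog_sub_one_add_le (j k : ℕ) {n : ℕ} (hn : 1 ≤ n) :
    polyLog (j + 1) k (n - 1) + polyLog j k n ≤ polyLog (j + 1) k n := by
  rw [polyLog_succ, polyLog_succ, Nat.cast_sub hn, Nat.cast_one]
  have hmono := polyLog_monotone j k (Nat.sub_le n 1)
  have : (1 : ℝ) ≤ n := by exact_mod_cast hn
  nlinarith

theorem polyLog_zero_isLittleO (k j k' : ℕ) :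
    polyLog 0 k =o[atTop] polyLog (j + 1) k' := by
  have hlog : polyLog 0 k =o[atTop] fun n : ℕ => (n : ℝ) :=
    ((Real.isLittleO_pow_log_id_atTop (n := k)).comp_tendsto
      tendsto_natCast_atTop_atTop).congr (fun n => by simp [polyLog]) fun n => rfl
  refine hlog.trans_isBigO (IsBigO.of_bound 1 ?_)
  filter_upwards [eventually_one_le_polyLog j k'] with n hn
  rw [polyLog_succ, one_mul, norm_mul]
  exact le_mul_of_one_le_right (norm_nonneg _) (hn.trans (Real.le_norm_self _))

theorem isTheta_polyLog_succ_of_recurrence {T F : ℕ → ℝ} {j k : ℕ} (hT₀ : ∀ n, 0 ≤ T n)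
    (hF₀ : ∀ n, 0 ≤ F n) (hrec : ∀ n ≥ 2, T n = F n + T (n - 1))
    (hF : F =Θ[atTop] polyLog j k) : T =Θ[atTop] polyLog (j + 1) k := by
  refine ⟨isBigO_of_recurrence (r := (· - 1)) hT₀ ?_ hF.isBigO
    (Eventually.of_forall (polyLog_nonneg j k)) one_pos ?_ (eventually_one_le_polyLog _ _), ?_⟩
  · filter_upwards [eventually_ge_atTop 2] with n hn
    exact ⟨by omega, (hrec n hn).le⟩
  · filter_upwards [eventually_ge_atTop 1] with n hn
    simpa using polyLog_sub_one_add_le j k hn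
  · exact funext (polyLog_succ j k) ▸ natCast_mul_isBigO_of_recurrence hT₀ hF₀ hrec
      hF.symm.isBigO (polyLog_monotone j k) (polyLog_nonneg j k) (polyLog_isBigO_half j k)

theorem isBigO_polyLog_of_halving_recurrence {T F : ℕ → ℝ} {j k : ℕ} (hj : 1 ≤ j)
    (hT₀ : ∀ n, 0 ≤ T n) (hrec : ∀ n ≥ 2, T n ≤ F n + T (n / 2))
    (hF : F =O[atTop] polyLog j k) : T =O[atTop] polyLog j k :=
  isBigO_of_recurrence (r := (· / 2)) (ε := 1 / 2) hT₀
    (by filter_upwards [eventually_ge_atTop 2] with n hn using ⟨by omega, hrec n hn⟩)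
    hF (Eventually.of_forall (polyLog_nonneg j k)) one_half_pos
    (Eventually.of_forall fun n => by linarith [two_mul_polyLog_half_le hj k n])
    (eventually_one_le_polyLog j k)

theorem isBigO_polyLog_zero_succ_of_halving_recurrence {T F : ℕ → ℝ} {k : ℕ}
    (hT₀ : ∀ n, 0 ≤ T n) (hrec : ∀ n ≥ 2, T n ≤ F n + T (n / 2))
    (hF : F =O[atTop] polyLog 0 k) : T =O[atTop] polyLog 0 (k + 1) :=
  isBigO_of_recurrence (r := (· / 2)) hT₀
    (by filter_upwards [eventually_ge_atTop 2] with n hn using ⟨by omega, hrec n hn⟩)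
    hF (Eventually.of_forall (polyLog_nonneg 0 k)) (Real.log_pos one_lt_two)
    (by filter_upwards [eventually_ge_atTop 2] with n hn
        using polyLog_zero_succ_half_add_le k hn)
    (eventually_one_le_polyLog 0 (k + 1))

theorem superlinear_speedup_iff_general (j₁ k₁ j₂ k₂ : ℕ)
    (Tb Tc Td Tr Tu : ℕ → NNReal)
    (hTb : (fun n : ℕ => (Tb n : ℝ)) =Θ[atTop]
      fun n : ℕ => (n : ℝ) ^ j₁ * (Real.log n) ^ k₁)
    (hTcd : (fun n : ℕ => ((Tc n : ℝ) + (Td n : ℝ))) =Θ[atTop]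
      fun n : ℕ => (n : ℝ) ^ j₂ * (Real.log n) ^ k₂)
    (hTr : ∀ n, 2 ≤ n → Tr n = Tb n + Tr (n - 1))
    (hTu : ∀ n, 2 ≤ n → Tu n = Tc n + Td n + Tu (n / 2)) :
    ((fun n : ℕ => (Tu n : ℝ)) =o[atTop] fun n : ℕ => (Tr n : ℝ)) ↔
    ((fun n : ℕ => ((Tc n : ℝ) + (Td n : ℝ))) =o[atTop]
      fun n : ℕ => (n : ℝ) * (Tb n : ℝ)) := by
  change _ =Θ[atTop] polyLog j₁ k₁ at hTb
  change _ =Θ[atTop] polyLog j₂ k₂ at hTcd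
  set F : ℕ → ℝ := fun n => (Tc n : ℝ) + (Td n : ℝ)
  have hTu' : ∀ n ≥ 2, (Tu n : ℝ) = F n + Tu (n / 2) := fun n hn => by simp [F, hTu n hn]
  have hTrΘ : (fun n => (Tr n : ℝ)) =Θ[atTop] polyLog (j₁ + 1) k₁ :=
    isTheta_polyLog_succ_of_recurrence (fun n => (Tr n).coe_nonneg) (fun n => (Tb n).coe_nonneg)
      (fun n hn => by simp [hTr n hn]) hTb
  have hnTb : (fun n : ℕ => (n : ℝ) * Tb n) =Θ[atTop] polyLog (j₁ + 1) k₁ :=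
    funext (polyLog_succ j₁ k₁) ▸ (isTheta_refl _ _).mul hTb
  have hFTu : F =O[atTop] fun n => (Tu n : ℝ) := by
    refine IsBigO.of_bound 1 ?_
    filter_upwards [eventually_ge_atTop 2] with n hn
    rw [one_mul, Real.norm_of_nonneg (by positivity), Real.norm_of_nonneg (Tu n).coe_nonneg,
      hTu' n hn]
    exact le_add_of_nonneg_right (Tu (n / 2)).coe_nonneg
  have hTu_rec : ∀ n ≥ 2, (Tu n : ℝ) ≤ F n + Tu (n / 2) := fun n hn => (hTu' n hn).le
  constructor
  · intro h
    exact (hFTu.trans_isLittleO h).trans_isBigO (hTrΘ.trans hnTb.symm).isBigO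
  · intro h
    rcases j₂ with _ | j₂
    · calc (fun n => (Tu n : ℝ))
          =O[atTop] polyLog 0 (k₂ + 1) := isBigO_polyLog_zero_succ_of_halving_recurrence
            (fun n => (Tu n).coe_nonneg) hTu_rec hTcd.isBigO
        _ =o[atTop] polyLog (j₁ + 1) k₁ := polyLog_zero_isLittleO _ _ _
        _ =O[atTop] fun n => (Tr n : ℝ) := hTrΘ.symm.isBigO
    · calc (fun n => (Tu n : ℝ))
          =O[atTop] polyLog (j₂ + 1) k₂ := isBigO_polyLog_of_halving_recurrence
            (Nat.le_add_left 1 j₂) (fun n => (Tu n).coe_nonneg) hTu_rec hTcd.isBigO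
        _ =O[atTop] F := hTcd.symm.isBigO
        _ =o[atTop] fun n => (n : ℝ) * Tb n := h
        _ =O[atTop] fun n => (Tr n : ℝ) := (hnTb.trans hTrΘ.symm).isBigO

/-- Sufficient and necessary condition for super-linear speedup:
T_u = o(T_r) iff the combined recursive step is asymptotically strictly
cheaper than the entire original recursion, T_c + T_d = o(n · T_b). -/
theorem superlinear_speedup_iff (j₁ k₁ j₂ k₂ : ℕ)
    (Tb Tc Td Tr Tu : ℕ → NNReal)
    (hTb : (fun n : ℕ => (Tb n : ℝ)) =Θ[atTop]
      fun n : ℕ => (n : ℝ) ^ j₁ * (Real.log n) ^ k₁)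
    (hTcd : (fun n : ℕ => ((Tc n : ℝ) + (Td n : ℝ))) =Θ[atTop]
      fun n : ℕ => (n : ℝ) ^ j₂ * (Real.log n) ^ k₂)
    (hTr : ∀ n, 2 ≤ n → Tr n = Tb n + Tr (n - 1))
    (hTu : ∀ n, 2 ≤ n → Tu n = Tc n + Td n + Tu (n / 2))
    (hTrb : ∃ C, ∀ n, n < 2 → Tr n ≤ C)
    (hTub : ∃ C, ∀ n, n < 2 → Tu n ≤ C) :
    ((fun n : ℕ => (Tu n : ℝ)) =o[atTop] fun n : ℕ => (Tr n : ℝ)) ↔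
    ((fun n : ℕ => ((Tc n : ℝ) + (Td n : ℝ))) =o[atTop]
      fun n : ℕ => (n : ℝ) * (Tb n : ℝ)) :=
  superlinear_speedup_iff_general j₁ k₁ j₂ k₂ Tb Tc Td Tr Tu hTb hTcd hTr hTu
end
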